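/- Let c > 0, d > 0, r > 0, T > 0. Define K₀(x) = (1/(2r))·√(π/(2dc))·e^{−√(c/d)·|x|}, g(x) = (e^{−cT}/√(2dT))·e^{−x²/(4dT)}, erf(z) = (2/√π)·∫₀^z e^{−t²} dt, and φ(x) = (e^{√(c/d)·x}/2)·(1 + erf( −x/(2√(dT)) − √(cT) )). Then for every x ∈ ℝ, (1/√(2π)) ∫_ℝ K₀(x − y)·g(y) dy = (1/(2r))·√(π/(2dc))·( φ(x) + φ(−x) ). -/

import Mathlib

open MeasureTheory

/-- The Gauss error function. -/
noncomputable def erf (z : ℝ) : ℝ :=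
  (2 / Real.sqrt Real.pi) * ∫ t in (0 : ℝ)..z, Real.exp (-t ^ 2)

/-!
Split the convolution integral at `y = x`. On each half-line the kernel `e^{-a|x - y|}` is an
exponential `e^{±a(y - x)}`, and completing the square turns its product with the Gaussian
`e^{-(y/s)²}` into a shifted Gaussian times `e^{(as/2)²}`, whose half-line integral is an erf.
With `a = √(c/d)` and `s = 2√(dT)` that factor is `e^{cT}`, which cancels the `e^{-cT}` of `g`.
-/

open Set Real

section Substitution

variable {E : Type*} [NormedAddCommGroup E] [NormedSpace ℝ E]

theorem setIntegral_Iic_comp_sub (f : ℝ → E) (b x : ℝ) :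
    ∫ y in Iic x, f (y - b) = ∫ u in Iic (x - b), f u := by
  simpa only [preimage_sub_const_Iic, sub_add_cancel] using
    (measurePreserving_sub_right volume b).setIntegral_preimage_emb
      (measurableEmbedding_subRight b) f (Iic (x - b))

theorem setIntegral_Iic_comp_div (f : ℝ → E) (x : ℝ) {s : ℝ} (hs : 0 < s) :
    ∫ y in Iic x, f (y / s) = s • ∫ u in Iic (x / s), f u := by
  simp_rw [div_eq_inv_mul, ← smul_eq_mul]
  rw [Measure.setIntegral_comp_smul_of_pos _ _ _ (inv_pos.2 hs),
    LinearOrderedField.smul_Iic (inv_pos.2 hs)]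
  simp [smul_eq_mul]

theorem setIntegral_Iic_comp_sub_div (f : ℝ → E) (b x : ℝ) {s : ℝ} (hs : 0 < s) :
    ∫ y in Iic x, f ((y - b) / s) = s • ∫ u in Iic ((x - b) / s), f u := by
  rw [setIntegral_Iic_comp_sub (fun u => f (u / s)), setIntegral_Iic_comp_div f _ hs]

end Substitution

theorem integral_Iic_exp_neg_sq (m : ℝ) :
    ∫ y in Iic m, exp (-y ^ 2) = √π / 2 * (1 + erf m) := by
  have integrable : Integrable fun y : ℝ => exp (-y ^ 2) := by
    simpa using integrable_exp_neg_mul_sq one_pos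
  have half : ∫ y in Iic (0 : ℝ), exp (-y ^ 2) = √π / 2 := by
    have := integral_comp_neg_Ioi 0 fun y : ℝ => exp (-y ^ 2)
    simp only [even_two.neg_pow, neg_zero] at this
    simpa [← this] using integral_gaussian_Ioi 1
  have interval : ∫ t in (0 : ℝ)..m, exp (-t ^ 2) = √π / 2 * erf m := by
    rw [erf]; field_simp
  rw [← intervalIntegral.integral_Iic_sub_Iic integrable.integrableOn integrable.integrableOn]
    at interval
  linarith

theorem integral_Iic_exp_mul_sub_mul_exp_neg_div_sq (a s x : ℝ) (hs : 0 < s) :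
    ∫ y in Iic x, exp (a * (y - x)) * exp (-(y / s) ^ 2)
      = exp ((a * s / 2) ^ 2 - a * x) * (s * √π / 2) * (1 + erf (x / s - a * s / 2)) := by
  have complete_square : ∀ y, exp (a * (y - x)) * exp (-(y / s) ^ 2)
      = exp ((a * s / 2) ^ 2 - a * x) * exp (-((y - a * s ^ 2 / 2) / s) ^ 2) := by
    intro y
    rw [← exp_add, ← exp_add]
    congr 1
    field_simp
    ring
  have upper_limit : (x - a * s ^ 2 / 2) / s = x / s - a * s / 2 := by
    field_simp
  simp_rw [complete_square]
  rw [integral_const_mul, setIntegral_Iic_comp_sub_div (fun u => exp (-u ^ 2)) _ _ hs,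
    integral_Iic_exp_neg_sq, smul_eq_mul, upper_limit]
  ring

theorem integral_Ioi_exp_mul_sub_mul_exp_neg_div_sq (a s x : ℝ) (hs : 0 < s) :
    ∫ y in Ioi x, exp (a * (x - y)) * exp (-(y / s) ^ 2)
      = exp ((a * s / 2) ^ 2 + a * x) * (s * √π / 2) * (1 + erf (-x / s - a * s / 2)) := by
  have reflect := integral_comp_neg_Ioi x fun y => exp (a * (y - -x)) * exp (-(y / s) ^ 2)
  rw [integral_Iic_exp_mul_sub_mul_exp_neg_div_sq _ _ _ hs, mul_neg, sub_neg_eq_add] at reflect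
  rw [← reflect]
  congr 1 with y
  rw [neg_div, even_two.neg_pow]
  ring_nf

theorem integral_exp_neg_mul_abs_sub_mul_exp_neg_div_sq {a s : ℝ} (ha : 0 ≤ a) (hs : 0 < s)
    (x : ℝ) :
    ∫ y, exp (-a * |x - y|) * exp (-(y / s) ^ 2)
      = exp ((a * s / 2) ^ 2) * (s * √π / 2) *
        (exp (-(a * x)) * (1 + erf (x / s - a * s / 2)) +
          exp (a * x) * (1 + erf (-x / s - a * s / 2))) := by
  have gaussian : Integrable fun y : ℝ => exp (-(y / s) ^ 2) := by
    simpa using (integrable_exp_neg_mul_sq one_pos).comp_div hs.ne'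
  have integrable : Integrable fun y => exp (-a * |x - y|) * exp (-(y / s) ^ 2) := by
    refine gaussian.bdd_mul (c := 1) (by fun_prop) (Filter.Eventually.of_forall fun y => ?_)
    rw [norm_of_nonneg (exp_pos _).le, exp_le_one_iff]
    exact mul_nonpos_of_nonpos_of_nonneg (neg_nonpos.2 ha) (abs_nonneg _)
  rw [← intervalIntegral.integral_Iic_add_Ioi integrable.integrableOn integrable.integrableOn,
    setIntegral_congr_fun measurableSet_Iic fun y (hy : y ≤ x) => by
      rw [abs_of_nonneg (sub_nonneg.2 hy), neg_mul, ← mul_neg, neg_sub],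
    setIntegral_congr_fun measurableSet_Ioi fun y (hy : x < y) => by
      rw [abs_of_neg (sub_neg.2 hy), neg_mul, mul_neg, neg_neg],
    integral_Iic_exp_mul_sub_mul_exp_neg_div_sq _ _ _ hs,
    integral_Ioi_exp_mul_sub_mul_exp_neg_div_sq _ _ _ hs, sub_eq_add_neg, exp_add, exp_add]
  ring

theorem stmt17_general (c d r T : ℝ) (hc : 0 < c) (hd : 0 < d) (hT : 0 < T)
    (K₀ g φ : ℝ → ℝ)
    (hK₀ : ∀ x : ℝ, K₀ x =
      (1 / (2 * r)) * Real.sqrt (Real.pi / (2 * d * c)) * Real.exp (-Real.sqrt (c / d) * |x|))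
    (hg : ∀ x : ℝ, g x =
      (Real.exp (-(c * T)) / Real.sqrt (2 * d * T)) * Real.exp (-(x ^ 2 / (4 * d * T))))
    (hφ : ∀ x : ℝ, φ x =
      (Real.exp (Real.sqrt (c / d) * x) / 2) *
        (1 + erf (-(x / (2 * Real.sqrt (d * T))) - Real.sqrt (c * T)))) :
    ∀ x : ℝ,
      (1 / Real.sqrt (2 * Real.pi)) * ∫ y : ℝ, K₀ (x - y) * g y
        = (1 / (2 * r)) * Real.sqrt (Real.pi / (2 * d * c)) * (φ x + φ (-x)) := by
  intro x
  rw [hφ, hφ]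
  set a := √(c / d)
  set w := √(d * T)
  set s := 2 * w
  set C := 1 / (2 * r) * √(π / (2 * d * c))
  have ha : 0 ≤ a := sqrt_nonneg _
  have hs : 0 < s := by positivity
  have hw : w ^ 2 = d * T := sq_sqrt (by positivity)
  have shift : a * s / 2 = √(c * T) := by
    rw [show a * s / 2 = a * w by ring, ← sqrt_mul (by positivity)]
    congr 1
    field_simp
  have gaussian_exponent (y : ℝ) : y ^ 2 / (4 * d * T) = (y / s) ^ 2 := by
    rw [div_pow, mul_pow, hw]
    ring
  have convolution : ∫ y, K₀ (x - y) * g y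
      = C * (exp (-(c * T)) / √(2 * d * T)) * ∫ y, exp (-a * |x - y|) * exp (-(y / s) ^ 2) := by
    rw [← integral_const_mul]
    congr 1 with y
    rw [hK₀, hg, gaussian_exponent]
    ring
  have shift_sq : √(c * T) ^ 2 = c * T := sq_sqrt (by positivity)
  have normalization :
      1 / √(2 * π) * (exp (-(c * T)) / √(2 * d * T)) * exp (c * T) * (s * √π / 2)
        = 1 / 2 := by
    have two : √2 ^ 2 = 2 := sq_sqrt (by norm_num)
    have exp_cancel : exp (-(c * T)) * exp (c * T) = 1 := by
      rw [← exp_add, neg_add_cancel, exp_zero]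
    have hw_pos : 0 < w := by positivity
    have scale : √(2 * d * T) = √2 * w := by rw [mul_assoc, sqrt_mul (by norm_num)]
    rw [scale, sqrt_mul (by norm_num)]
    field_simp
    linear_combination (2 * w) * exp_cancel - w * two
  rw [convolution, integral_exp_neg_mul_abs_sub_mul_exp_neg_div_sq ha hs, shift, shift_sq,
    neg_div, neg_neg, mul_neg]
  linear_combination C * (exp (-(a * x)) * (1 + erf (x / s - √(c * T))) +
    exp (a * x) * (1 + erf (-(x / s) - √(c * T)))) * normalization

theorem stmt17 (c d r T : ℝ) (hc : 0 < c) (hd : 0 < d) (hr : 0 < r) (hT : 0 < T)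
    (K₀ g φ : ℝ → ℝ)
    (hK₀ : ∀ x : ℝ, K₀ x =
      (1 / (2 * r)) * Real.sqrt (Real.pi / (2 * d * c)) * Real.exp (-Real.sqrt (c / d) * |x|))
    (hg : ∀ x : ℝ, g x =
      (Real.exp (-(c * T)) / Real.sqrt (2 * d * T)) * Real.exp (-(x ^ 2 / (4 * d * T))))
    (hφ : ∀ x : ℝ, φ x =
      (Real.exp (Real.sqrt (c / d) * x) / 2) *
        (1 + erf (-(x / (2 * Real.sqrt (d * T))) - Real.sqrt (c * T)))) :
    ∀ x : ℝ,
      (1 / Real.sqrt (2 * Real.pi)) * ∫ y : ℝ, K₀ (x - y) * g y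
        = (1 / (2 * r)) * Real.sqrt (Real.pi / (2 * d * c)) * (φ x + φ (-x)) :=
  stmt17_general c d r T hc hd hT K₀ g φ hK₀ hg hφ
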